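/- Let r0 be a natural number and let s : ℕ → ℕ satisfy s(0) = 1, s(r) = 2·s(r−1) for 1 ≤ r ≤ r0, s(r) = 2·s(r−1) for r > r0 with r − r0 odd, and s(r) = s(r−1) + 1 for r > r0 with r − r0 even. Then s(r) ≤ 2^r for all r ≤ r0 and s(r) ≤ (2^{r0} + 1)·2^{⌈(r−r0)/2⌉} for all r > r0. -/

import Mathlib

/-!
Below the threshold every rank doubles the length, so `s r = 2 ^ r`. Above it, the
sequence `t k = s (r0 + k)` alternates doubling and incrementing, and the exact values
`t (2m) + 1 = (t 0 + 1) 2^m` and `t (2m+1) + 2 = (t 0 + 1) 2^(m+1)` follow by induction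
on `m`; with `t 0 = 2 ^ r0` this gives the bound.
-/

theorem eq_two_pow_of_doubling {r0 : ℕ} {s : ℕ → ℕ} (h0 : s 0 = 1)
    (hdouble : ∀ r, 1 ≤ r → r ≤ r0 → s r = 2 * s (r - 1)) :
    ∀ r, r ≤ r0 → s r = 2 ^ r
  | 0, _ => h0
  | r + 1, hr => by
    rw [hdouble (r + 1) r.succ_pos hr, Nat.add_sub_cancel,
      eq_two_pow_of_doubling h0 hdouble r (by omega), pow_succ, mul_comm]

section DoubleThenIncrement

variable {t : ℕ → ℕ}

theorem add_one_eq_of_double_then_succ (hdouble : ∀ m, t (2 * m + 1) = 2 * t (2 * m))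
    (hsucc : ∀ m, t (2 * m + 2) = t (2 * m + 1) + 1) (m : ℕ) :
    t (2 * m) + 1 = (t 0 + 1) * 2 ^ m := by
  induction m with
  | zero => simp
  | succ m ih =>
    rw [show 2 * (m + 1) = 2 * m + 2 by ring, hsucc, hdouble, pow_succ, ← mul_assoc, ← ih]
    ring

theorem le_of_double_then_succ (hdouble : ∀ m, t (2 * m + 1) = 2 * t (2 * m))
    (hsucc : ∀ m, t (2 * m + 2) = t (2 * m + 1) + 1) (k : ℕ) :
    t k ≤ (t 0 + 1) * 2 ^ ((k + 1) / 2) := by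
  have hclosed := add_one_eq_of_double_then_succ hdouble hsucc
  obtain ⟨m, rfl | rfl⟩ := Nat.even_or_odd' k
  · rw [show (2 * m + 1) / 2 = m by omega, ← hclosed]
    omega
  · rw [show (2 * m + 1 + 1) / 2 = m + 1 by omega, hdouble, pow_succ, ← mul_assoc, ← hclosed]
    omega

end DoubleThenIncrement

/-- Lemma 2 of the paper: a rank-`r` sequence of a soft sequence heap with
    rank threshold `r0` has length at most `2 ^ r` for `r ≤ r0`, and at most
    `(2 ^ r0 + 1) * 2 ^ ⌈(r - r0) / 2⌉` for `r > r0`. -/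
theorem soft_sequence_heap_length_bound (r0 : ℕ) (s : ℕ → ℕ)
    (h0 : s 0 = 1)
    (hlow : ∀ r, 1 ≤ r → r ≤ r0 → s r = 2 * s (r - 1))
    (hodd : ∀ r, r0 < r → Odd (r - r0) → s r = 2 * s (r - 1))
    (heven : ∀ r, r0 < r → Even (r - r0) → s r = s (r - 1) + 1) :
    (∀ r, r ≤ r0 → s r ≤ 2 ^ r) ∧
    (∀ r, r0 < r → s r ≤ (2 ^ r0 + 1) * 2 ^ ((r - r0 + 1) / 2)) := by
  have hpow := eq_two_pow_of_doubling h0 hlow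
  refine ⟨fun r hr => (hpow r hr).le, fun r hr => ?_⟩
  have hdouble : ∀ m, s (r0 + (2 * m + 1)) = 2 * s (r0 + 2 * m) := fun m => by
    simpa using hodd (r0 + (2 * m + 1)) (by omega) (by simp)
  have hsucc : ∀ m, s (r0 + (2 * m + 2)) = s (r0 + (2 * m + 1)) + 1 := fun m => by
    simpa [add_assoc] using heven (r0 + (2 * m + 2)) (by omega) (by simp [parity_simps])
  obtain ⟨k, rfl⟩ := Nat.exists_eq_add_of_lt hr
  simpa [add_assoc, hpow r0 le_rfl] using
    le_of_double_then_succ (t := fun k => s (r0 + k)) hdouble hsucc (k + 1)
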